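/- Let ψ : ℝ × (ℝ \ {0}) → ℝ be continuous. Suppose there is a function γ : ℝ → ℝ, monotone increasing, such that for every ζ ∈ ℝ, ψ(γ(ζ), η) → ζ as η → 0. Then for every ζ ∈ ℝ there exists a sequence (γₜ, ηₜ) with (γₜ) bounded, ηₜ ≠ 0, ηₜ → 0, and ψ(γₜ, ηₜ) = ζ for all t. -/
import Mathlib


open Filter Topology

theorem stmt0
    (ψ : ℝ × ℝ → ℝ)
    (hψ : ContinuousOn ψ {p : ℝ × ℝ | p.2 ≠ 0})
    (γ : ℝ → ℝ) (hγ : Monotone γ)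
    (hlim : ∀ ζ : ℝ, Tendsto (fun η : ℝ => ψ (γ ζ, η)) (𝓝[≠] 0) (𝓝 ζ)) :
    ∀ ζ : ℝ, ∃ g h : ℕ → ℝ,
      (∃ C : ℝ, ∀ t, |g t| ≤ C) ∧
      (∀ t, h t ≠ 0) ∧
      Tendsto h atTop (𝓝 0) ∧
      (∀ t, ψ (g t, h t) = ζ) := by
  intro ζ
  have hab : γ (ζ - 1) ≤ γ (ζ + 1) := hγ (by linarith)
  have hopen : IsOpen {p : ℝ × ℝ | p.2 ≠ 0} :=
    isOpen_compl_singleton.preimage continuous_snd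
  have hcont : ∀ η : ℝ, η ≠ 0 → Continuous fun x : ℝ => ψ (x, η) := by
    intro η hη
    rw [continuous_iff_continuousAt]
    intro x
    have hmem : ((x, η) : ℝ × ℝ) ∈ {p : ℝ × ℝ | p.2 ≠ 0} := hη
    have : ContinuousAt (fun x : ℝ => ((x, η) : ℝ × ℝ)) x :=
      (continuous_id.prodMk continuous_const).continuousAt
    have h2 : ContinuousAt (ψ ∘ fun x : ℝ => ((x, η) : ℝ × ℝ)) x :=
      ContinuousAt.comp (x := x) (hψ.continuousAt (hopen.mem_nhds hmem)) this
    exact h2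
  have he1 : ∀ᶠ η in 𝓝[≠] (0:ℝ), ψ (γ (ζ - 1), η) < ζ :=
    (hlim (ζ - 1)).eventually_lt_const (by linarith)
  have he2 : ∀ᶠ η in 𝓝[≠] (0:ℝ), ζ < ψ (γ (ζ + 1), η) :=
    (hlim (ζ + 1)).eventually_const_lt (by linarith)
  have hchoice : ∀ t : ℕ, ∃ η : ℝ, η ≠ 0 ∧ |η| ≤ 1 / ((t : ℝ) + 1) ∧
      ψ (γ (ζ - 1), η) < ζ ∧ ζ < ψ (γ (ζ + 1), η) := by
    intro t
    have hsmall : ∀ᶠ η in 𝓝[≠] (0:ℝ), |η| ≤ 1 / ((t : ℝ) + 1) := by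
      apply eventually_nhdsWithin_of_eventually_nhds
      have hpos : (0:ℝ) < 1 / (t + 1) := by positivity
      filter_upwards [eventually_abs_sub_lt 0 hpos] with x hx
      simpa using hx.le
    have hne : ∀ᶠ η in 𝓝[≠] (0:ℝ), η ≠ (0:ℝ) := self_mem_nhdsWithin
    exact (hne.and (hsmall.and (he1.and he2))).exists.imp
      (fun η h => ⟨h.1, h.2.1, h.2.2.1, h.2.2.2⟩)
  choose h hne hsmall hlt hgt using hchoice
  have hg : ∀ t : ℕ, ∃ x ∈ Set.Icc (γ (ζ - 1)) (γ (ζ + 1)), ψ (x, h t) = ζ := by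
    intro t
    have := intermediate_value_Icc hab ((hcont (h t) (hne t)).continuousOn)
    have hmem : ζ ∈ Set.Icc (ψ (γ (ζ - 1), h t)) (ψ (γ (ζ + 1), h t)) :=
      ⟨(hlt t).le, (hgt t).le⟩
    obtain ⟨x, hx, hxe⟩ := this hmem
    exact ⟨x, hx, hxe⟩
  choose g hgmem hgeq using hg
  refine ⟨g, h, ⟨max |γ (ζ - 1)| |γ (ζ + 1)|, fun t => ?_⟩, hne, ?_, hgeq⟩
  · rcases hgmem t with ⟨h1, h2⟩
    rw [abs_le]
    constructor
    · calc -(max |γ (ζ - 1)| |γ (ζ + 1)|) ≤ -|γ (ζ - 1)| := by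
            simp [neg_le_neg_iff, le_max_left]
        _ ≤ γ (ζ - 1) := neg_abs_le _
        _ ≤ g t := h1
    · calc g t ≤ γ (ζ + 1) := h2
        _ ≤ |γ (ζ + 1)| := le_abs_self _
        _ ≤ max |γ (ζ - 1)| |γ (ζ + 1)| := le_max_right _ _
  · apply squeeze_zero_norm (fun t => hsmall t)
    exact tendsto_one_div_add_atTop_nhds_zero_nat
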